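/- arXiv:1110.0025 — 4 statements merged into one kernel-verified Lean document; each statement's English description precedes it below -/
import Mathlib

section
/- If the algorithm k is maximal in its range at V, i.e., for every w ∈ V, g(w, k(w)) = max{ g(w, o) : o ∈ 𝒪 } where 𝒪 = { k(w') : w' ∈ V }, then every VCG-based mechanism with output algorithm k is truthful. -/
/-!
Under a VCG-based mechanism, agent `i` with true valuation `v` who declares `w^i` while the
others declare `w^{-i}` receives `g((v, w^{-i}), k(w)) + h^i(w^{-i})`. The second summand does
not depend on `i`'s declaration, and declaring `v` makes `k` select an output maximising the
first summand over the range of `k`, which contains `k(w)`.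
-/

open Finset Function

section VCG

variable {ι O : Type*} [Fintype ι] [DecidableEq ι]

theorem sum_update_apply_eq_add_sum_erase (w : ι → O → ℝ) (i : ι) (v : O → ℝ) (o : O) :
    ∑ j, update w i v j o = v o + ∑ j ∈ univ.erase i, w j o := by
  rw [← add_sum_erase _ _ (mem_univ i), update_self]
  congr 1
  exact sum_congr rfl fun j hj => by rw [update_of_ne (ne_of_mem_erase hj)]

theorem vcg_utility_eq (k : (ι → O → ℝ) → O) (p h : ι → (ι → O → ℝ) → ℝ)
    (hp : ∀ i u, p i u = ∑ j ∈ univ.erase i, u j (k u) + h i u)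
    (i : ι) (v : O → ℝ) (u : ι → O → ℝ) :
    v (k u) + p i u = ∑ j, update u i v j (k u) + h i u := by
  rw [hp, sum_update_apply_eq_add_sum_erase, add_assoc]

end VCG

theorem stmt_1_general {O : Type*} {n : ℕ}
    (k : (Fin n → O → ℝ) → O) (p : Fin n → (Fin n → O → ℝ) → ℝ)
    (h : Fin n → (Fin n → O → ℝ) → ℝ)
    (hInd : ∀ (i : Fin n) (w w' : Fin n → O → ℝ),
      (∀ j, j ≠ i → w j = w' j) → h i w = h i w')
    (hp : ∀ (i : Fin n) (w : Fin n → O → ℝ),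
      p i w = (∑ j ∈ Finset.univ.erase i, w j (k w)) + h i w)
    (hmax : ∀ w : Fin n → O → ℝ,
      IsGreatest {r : ℝ | ∃ w' : Fin n → O → ℝ, r = ∑ i, w i (k w')}
        (∑ i, w i (k w))) :
    ∀ (i : Fin n) (v : O → ℝ) (w : Fin n → O → ℝ),
      v (k (Function.update w i v)) + p i (Function.update w i v) ≥
        v (k w) + p i w := by
  intro i v w
  have h_indep : h i (update w i v) = h i w := hInd i _ _ fun j hj => update_of_ne hj _ _
  have h_opt : ∑ j, update w i v j (k w) ≤ ∑ j, update w i v j (k (update w i v)) :=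
    (hmax (update w i v)).2 ⟨w, rfl⟩
  rw [vcg_utility_eq k p h hp, vcg_utility_eq k p h hp, update_idem, h_indep]
  exact add_le_add_left h_opt _

/-- if the output algorithm `k` is maximal in its range at `V`
(for every `w`, `g(w, k(w))` is the maximum of `g(w, ·)` over the range of `k`),
then every VCG-based mechanism with output algorithm `k` is truthful. -/
theorem stmt_1 {O : Type*} [Fintype O] [Nonempty O] {n : ℕ} (hn : 0 < n)
    (k : (Fin n → O → ℝ) → O) (p : Fin n → (Fin n → O → ℝ) → ℝ)
    (h : Fin n → (Fin n → O → ℝ) → ℝ)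
    (hInd : ∀ (i : Fin n) (w w' : Fin n → O → ℝ),
      (∀ j, j ≠ i → w j = w' j) → h i w = h i w')
    (hp : ∀ (i : Fin n) (w : Fin n → O → ℝ),
      p i w = (∑ j ∈ Finset.univ.erase i, w j (k w)) + h i w)
    (hmax : ∀ w : Fin n → O → ℝ,
      IsGreatest {r : ℝ | ∃ w' : Fin n → O → ℝ, r = ∑ i, w i (k w')}
        (∑ i, w i (k w))) :
    ∀ (i : Fin n) (v : O → ℝ) (w : Fin n → O → ℝ),
      v (k (Function.update w i v)) + p i (Function.update w i v) ≥
        v (k w) + p i w :=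
  stmt_1_general k p h hInd hp hmax
end

section
/- If a VCG-based mechanism (k, p) for the combinatorial auction problem is truthful, then its allocation algorithm k is maximal in its range at Ṽ: for every v ∈ Ṽ, g(v, k(v)) = max{ g(v, o) : o ∈ 𝒪 }, where 𝒪 = { k(w) : w ∈ Ṽ } is the range of k at Ṽ. -/
/-!
Truthfulness of a VCG-based mechanism says exactly that `k` is welfare-maximizing against
unilateral deviations: changing one coordinate of a profile from `P` to `Q` never moves `k`
to an allocation with smaller `Q`-welfare than `k P`. Let `o = k w` with `w ∈ Ṽ`, and give
every agent `j` a large additive bonus `M` per item of `o j`. Adding these bonuses to `w`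
one agent at a time never changes the allocation, because `w ∈ Ṽ` forbids ties. Then
replacing `w` by `v` one agent at a time keeps every agent holding its `o`-bundle, since
the bonuses outweigh all other welfare. Finally, removing the bonuses one agent at a time
preserves the inequality `welfare · o ≤ welfare · (k ·)`, which at the end reads
`welfare v (k w) ≤ welfare v (k v)`.
-/

/-- A combinatorial-auction valuation: a real-valued function on bundles of items that
is zero on the empty bundle and monotone (hence nonnegative). -/
structure CAValuation (S : Type*) where
  val : Finset S → ℝ
  val_empty : val ∅ = 0
  mono : ∀ s t : Finset S, s ⊆ t → val s ≤ val t

/-- An allocation: an `n`-tuple of pairwise disjoint bundles of items. -/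
abbrev CAAllocation (S : Type*) (n : ℕ) : Type _ :=
  {f : Fin n → Finset S // ∀ i j : Fin n, i ≠ j → Disjoint (f i) (f j)}

/-- The total welfare of allocation `x` at valuation profile `v`. -/
def welfare {S : Type*} {n : ℕ} (v : Fin n → CAValuation S) (x : CAAllocation S n) : ℝ :=
  ∑ i, (v i).val (x.1 i)

open Finset Function

namespace CAValuation

variable {S : Type*}

@[ext]
theorem ext {a b : CAValuation S} (h : a.val = b.val) : a = b := by
  cases a; cases b; cases h; rfl

theorem val_nonneg (a : CAValuation S) (s : Finset S) : 0 ≤ a.val s :=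
  a.val_empty ▸ a.mono ∅ s (empty_subset s)

instance : Add (CAValuation S) where
  add a b :=
    { val := a.val + b.val
      val_empty := by simp [a.val_empty, b.val_empty]
      mono := fun s t hst => add_le_add (a.mono s t hst) (b.mono s t hst) }

@[simp]
theorem add_val (a b : CAValuation S) (s : Finset S) : (a + b).val s = a.val s + b.val s :=
  rfl

variable [DecidableEq S]

def bonus (M : ℕ) (t : Finset S) : CAValuation S where
  val s := M * #(s ∩ t)
  val_empty := by simp
  mono s t' h := by gcongr

@[simp]
theorem bonus_val (M : ℕ) (t s : Finset S) : (bonus M t).val s = M * #(s ∩ t) :=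
  rfl

theorem bonus_bot_val (M : ℕ) (s : Finset S) : (bonus M ⊥).val s = 0 := by
  simp

theorem bonus_val_le (M : ℕ) (t s : Finset S) : (bonus M t).val s ≤ (bonus M t).val t := by
  simp only [bonus_val, inter_self]
  gcongr
  exact inter_subset_right

end CAValuation

open CAValuation

section Auction

variable {S : Type*} {n : ℕ}

theorem welfare_nonneg (P : Fin n → CAValuation S) (x : CAAllocation S n) :
    0 ≤ welfare P x :=
  sum_nonneg fun j _ => (P j).val_nonneg _

theorem welfare_mono (P : Fin n → CAValuation S) {x y : CAAllocation S n}
    (h : ∀ j, x.1 j ⊆ y.1 j) : welfare P x ≤ welfare P y :=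
  sum_le_sum fun j _ => (P j).mono _ _ (h j)

theorem welfare_le_sum_val_univ [Fintype S] (P : Fin n → CAValuation S)
    (x : CAAllocation S n) : welfare P x ≤ ∑ j, (P j).val univ :=
  sum_le_sum fun j _ => (P j).mono _ _ (subset_univ _)

theorem welfare_add (P Q : Fin n → CAValuation S) (x : CAAllocation S n) :
    welfare (P + Q) x = welfare P x + welfare Q x :=
  sum_add_distrib

theorem welfare_eq_add_sum_erase (P : Fin n → CAValuation S) (i : Fin n)
    (x : CAAllocation S n) :
    welfare P x = (P i).val (x.1 i) + ∑ j ∈ univ.erase i, (P j).val (x.1 j) :=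
  (add_sum_erase _ _ (mem_univ i)).symm

theorem welfare_update_eq_add_sum_erase (P : Fin n → CAValuation S) (i : Fin n)
    (z : CAValuation S) (x : CAAllocation S n) :
    welfare (update P i z) x = z.val (x.1 i) + ∑ j ∈ univ.erase i, (P j).val (x.1 j) := by
  rw [welfare_eq_add_sum_erase _ i, update_self]
  congr 1
  exact sum_congr rfl fun j hj => by rw [update_of_ne (ne_of_mem_erase hj)]

theorem welfare_update (P : Fin n → CAValuation S) (i : Fin n) (z : CAValuation S)
    (x : CAAllocation S n) :
    welfare (update P i z) x = welfare P x + (z.val (x.1 i) - (P i).val (x.1 i)) := by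
  rw [welfare_update_eq_add_sum_erase, welfare_eq_add_sum_erase P i]
  ring

theorem welfare_piecewise_le [Fintype S] (P Q : Fin n → CAValuation S) (s : Finset (Fin n))
    (x : CAAllocation S n) :
    welfare (s.piecewise Q P) x ≤ ∑ j, ((P j).val univ + (Q j).val univ) :=
  (welfare_le_sum_val_univ _ x).trans <| sum_le_sum fun j _ => by
    by_cases hj : j ∈ s <;> simp [hj, val_nonneg]

section Bonus

variable [DecidableEq S]

theorem welfare_bonus_of_subset (M : ℕ) {t : Fin n → Finset S} {x : CAAllocation S n}
    (h : ∀ j, t j ⊆ x.1 j) : welfare (bonus M ∘ t) x = M * ∑ j, #(t j) := by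
  push_cast [welfare, mul_sum]
  exact sum_congr rfl fun j _ => by simp [inter_eq_right.mpr (h j)]

theorem welfare_bonus_add_le_of_not_subset (M : ℕ) {t : Fin n → Finset S}
    {x : CAAllocation S n} (h : ¬ ∀ j, t j ⊆ x.1 j) :
    welfare (bonus M ∘ t) x + M ≤ M * ∑ j, #(t j) := by
  obtain ⟨j₀, hj₀⟩ := not_forall.mp h
  have hlt : ∑ j, #(x.1 j ∩ t j) < ∑ j, #(t j) :=
    sum_lt_sum (fun _ _ => card_le_card inter_subset_right) ⟨j₀, mem_univ j₀,
      card_lt_card (ssubset_of_subset_of_ne inter_subset_right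
        fun he => hj₀ (he ▸ inter_subset_left))⟩
  have hM : M * (∑ j, #(x.1 j ∩ t j) + 1) ≤ M * ∑ j, #(t j) := Nat.mul_le_mul_left M hlt
  have hw : welfare (bonus M ∘ t) x = M * ∑ j, #(x.1 j ∩ t j) := by
    push_cast [welfare, mul_sum]; rfl
  rw [hw]
  exact_mod_cast (by linarith : M * ∑ j, #(x.1 j ∩ t j) + M ≤ M * ∑ j, #(t j))

theorem eq_of_welfare_add_bonus_eq {w : Fin n → CAValuation S} (hw : Injective (welfare w))
    {M : ℕ} (hM : ∀ x, welfare w x < M) {t : Fin n → Finset S} {o m : CAAllocation S n}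
    (ht : ∀ j, t j ⊆ o.1 j) (h : welfare (w + bonus M ∘ t) m = welfare (w + bonus M ∘ t) o) :
    m = o := by
  rw [welfare_add, welfare_add, welfare_bonus_of_subset M ht] at h
  have hm : ∀ j, t j ⊆ m.1 j := by
    by_contra hnot
    linarith [welfare_bonus_add_le_of_not_subset M hnot, hM m, welfare_nonneg w o]
  rw [welfare_bonus_of_subset M hm] at h
  exact hw (by linarith)

theorem add_bonus_update (P : Fin n → CAValuation S) (M : ℕ) (t : Fin n → Finset S)
    (i : Fin n) (a : Finset S) :
    P + bonus M ∘ update t i a = update (P + bonus M ∘ t) i (P i + bonus M a) := by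
  rw [comp_update, Function.update_add, update_eq_self]

theorem update_add_bonus (P : Fin n → CAValuation S) (M : ℕ) (t : Fin n → Finset S)
    (i : Fin n) (a : CAValuation S) :
    update P i a + bonus M ∘ t = update (P + bonus M ∘ t) i (a + bonus M (t i)) := by
  rw [Function.update_add]
  exact congrArg _ (update_eq_self i (bonus M ∘ t)).symm

theorem add_bonus_comp_bot (P : Fin n → CAValuation S) (M : ℕ) :
    P + bonus M ∘ (⊥ : Fin n → Finset S) = P := by
  ext j s; simp

end Bonus

def IsUnilaterallyOptimal (k : (Fin n → CAValuation S) → CAAllocation S n) : Prop :=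
  ∀ (P : Fin n → CAValuation S) (i : Fin n) (z : CAValuation S),
    welfare (update P i z) (k P) ≤ welfare (update P i z) (k (update P i z))

theorem isUnilaterallyOptimal_of_truthful
    {k : (Fin n → CAValuation S) → CAAllocation S n}
    {p h : Fin n → (Fin n → CAValuation S) → ℝ}
    (hInd : ∀ (i : Fin n) (w w' : Fin n → CAValuation S),
      (∀ j, j ≠ i → w j = w' j) → h i w = h i w')
    (hp : ∀ (i : Fin n) (w : Fin n → CAValuation S),
      p i w = (∑ j ∈ univ.erase i, (w j).val ((k w).1 j)) + h i w)
    (htruth : ∀ (i : Fin n) (v : CAValuation S) (w : Fin n → CAValuation S),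
      v.val ((k (update w i v)).1 i) + p i (update w i v) ≥ v.val ((k w).1 i) + p i w) :
    IsUnilaterallyOptimal k := by
  intro P i z
  have htz := htruth i z P
  rw [hp, hp, hInd i (update P i z) P fun j hj => update_of_ne hj z P] at htz
  rw [welfare_update_eq_add_sum_erase, welfare_eq_add_sum_erase (update P i z) i, update_self]
  linarith

namespace IsUnilaterallyOptimal

variable {k : (Fin n → CAValuation S) → CAAllocation S n}

theorem welfare_apply_update_le (hk : IsUnilaterallyOptimal k) (P : Fin n → CAValuation S)
    (i : Fin n) (z : CAValuation S) : welfare P (k (update P i z)) ≤ welfare P (k P) := by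
  simpa [update_idem, update_eq_self] using hk (update P i z) i (P i)

theorem welfare_update_le_of_le (hk : IsUnilaterallyOptimal k) {P : Fin n → CAValuation S}
    {i : Fin n} {z : CAValuation S} {x : CAAllocation S n}
    (hx : welfare P x ≤ welfare P (k P))
    (hz : z.val (x.1 i) + (P i).val ((k P).1 i) ≤ z.val ((k P).1 i) + (P i).val (x.1 i)) :
    welfare (update P i z) x ≤ welfare (update P i z) (k (update P i z)) := by
  refine le_trans ?_ (hk P i z)
  rw [welfare_update, welfare_update]
  linarith

theorem welfare_update_apply_eq (hk : IsUnilaterallyOptimal k) {P : Fin n → CAValuation S}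
    {i : Fin n} {z : CAValuation S}
    (hz : ∀ s, z.val s + (P i).val ((k P).1 i) ≤ z.val ((k P).1 i) + (P i).val s) :
    welfare (update P i z) (k (update P i z)) = welfare (update P i z) (k P) := by
  refine le_antisymm ?_ (hk P i z)
  have hback := hk.welfare_apply_update_le P i z
  have hzi := hz ((k (update P i z)).1 i)
  rw [welfare_update, welfare_update]
  linarith

section Bonus

variable [DecidableEq S]

theorem apply_add_bonus_self (hk : IsUnilaterallyOptimal k) {w : Fin n → CAValuation S}
    (hw : Injective (welfare w)) {M : ℕ} (hM : ∀ x, welfare w x < M) :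
    k (w + bonus M ∘ (k w).1) = k w := by
  set o := k w
  suffices ∀ s : Finset (Fin n), k (w + bonus M ∘ s.piecewise o.1 ⊥) = o by
    simpa using this univ
  intro s
  induction s using Finset.induction_on with
  | empty => rw [piecewise_empty, add_bonus_comp_bot]
  | insert i s hi ih =>
    have hz : ∀ b, (w i + bonus M (o.1 i)).val b
          + (w i + bonus M (s.piecewise o.1 ⊥ i)).val (o.1 i)
        ≤ (w i + bonus M (o.1 i)).val (o.1 i)
          + (w i + bonus M (s.piecewise o.1 ⊥ i)).val b := by
      intro b
      simp only [piecewise_eq_of_notMem _ _ _ hi, Pi.bot_apply, add_val, bonus_bot_val]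
      linarith [bonus_val_le M (o.1 i) b]
    have key := hk.welfare_update_apply_eq (P := w + bonus M ∘ s.piecewise o.1 ⊥) (i := i)
      (z := w i + bonus M (o.1 i)) (by rwa [ih])
    rw [← add_bonus_update, ih, ← piecewise_insert] at key
    refine eq_of_welfare_add_bonus_eq hw hM (fun j => ?_) key
    by_cases hj : j ∈ insert i s <;> simp [hj]

theorem subset_apply_update_add_bonus (hk : IsUnilaterallyOptimal k)
    {P : Fin n → CAValuation S} {i : Fin n} {a : CAValuation S} {M : ℕ} {t : Fin n → Finset S}
    (hP : ∀ j, t j ⊆ (k (P + bonus M ∘ t)).1 j) (hM : ∀ x, welfare (update P i a) x < M) :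
    ∀ j, t j ⊆ (k (update P i a + bonus M ∘ t)).1 j := by
  have h := hk (P + bonus M ∘ t) i (a + bonus M (t i))
  rw [← update_add_bonus, welfare_add, welfare_add, welfare_bonus_of_subset M hP] at h
  by_contra hnot
  linarith [welfare_bonus_add_le_of_not_subset M hnot, hM (k (update P i a + bonus M ∘ t)),
    welfare_nonneg (update P i a) (k (P + bonus M ∘ t))]

theorem subset_apply_add_bonus [Fintype S] (hk : IsUnilaterallyOptimal k)
    {P Q : Fin n → CAValuation S} {M : ℕ} {t : Fin n → Finset S}
    (hP : ∀ j, t j ⊆ (k (P + bonus M ∘ t)).1 j)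
    (hM : ∑ j, ((P j).val univ + (Q j).val univ) < M) :
    ∀ j, t j ⊆ (k (Q + bonus M ∘ t)).1 j := by
  suffices ∀ s : Finset (Fin n), ∀ j, t j ⊆ (k (s.piecewise Q P + bonus M ∘ t)).1 j by
    simpa using this univ
  intro s
  induction s using Finset.induction_on with
  | empty => simpa using hP
  | insert i s _ ih =>
    rw [piecewise_insert]
    refine hk.subset_apply_update_add_bonus ih fun x => ?_
    rw [← piecewise_insert]
    exact (welfare_piecewise_le P Q _ x).trans_lt hM

theorem welfare_le_of_subset_apply_add_bonus (hk : IsUnilaterallyOptimal k)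
    {v : Fin n → CAValuation S} {M : ℕ} {o : CAAllocation S n}
    (ho : ∀ j, o.1 j ⊆ (k (v + bonus M ∘ o.1)).1 j) :
    welfare v o ≤ welfare v (k v) := by
  suffices ∀ s : Finset (Fin n), welfare (v + bonus M ∘ s.piecewise ⊥ o.1) o
      ≤ welfare (v + bonus M ∘ s.piecewise ⊥ o.1) (k (v + bonus M ∘ s.piecewise ⊥ o.1)) by
    simpa [add_bonus_comp_bot] using this univ
  intro s
  induction s using Finset.induction_on with
  | empty =>
    rw [piecewise_empty, welfare_add, welfare_add, welfare_bonus_of_subset M ho,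
      welfare_bonus_of_subset M fun _ => subset_rfl]
    exact add_le_add_left (welfare_mono v ho) _
  | insert i s hi ih =>
    set y := k (v + bonus M ∘ s.piecewise ⊥ o.1)
    have hz : (v i + bonus M ⊥).val (o.1 i) + (v i + bonus M (s.piecewise ⊥ o.1 i)).val (y.1 i)
        ≤ (v i + bonus M ⊥).val (y.1 i) + (v i + bonus M (s.piecewise ⊥ o.1 i)).val (o.1 i) := by
      simp only [piecewise_eq_of_notMem _ _ _ hi, add_val, bonus_bot_val]
      linarith [bonus_val_le M (o.1 i) (y.1 i)]
    have key := hk.welfare_update_le_of_le ih hz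
    rw [← add_bonus_update] at key
    rw [piecewise_insert]
    exact key

end Bonus

theorem welfare_apply_le [Fintype S] (hk : IsUnilaterallyOptimal k)
    {v w : Fin n → CAValuation S} (hw : Injective (welfare w)) :
    welfare v (k w) ≤ welfare v (k v) := by
  classical
  obtain ⟨M, hM⟩ := exists_nat_gt (∑ j, ((w j).val univ + (v j).val univ))
  have hwM : ∀ x, welfare w x < M := fun x =>
    (welfare_le_sum_val_univ w x).trans_lt <|
      (sum_le_sum fun j _ => le_add_of_nonneg_right ((v j).val_nonneg _)).trans_lt hM
  have hfixed := hk.apply_add_bonus_self hw hwM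
  refine hk.welfare_le_of_subset_apply_add_bonus (hk.subset_apply_add_bonus ?_ hM)
  rw [hfixed]
  exact fun _ => subset_rfl

end IsUnilaterallyOptimal

end Auction

theorem stmt_4_general {S : Type*} [Fintype S]
    {n : ℕ}
    (k : (Fin n → CAValuation S) → CAAllocation S n)
    (p : Fin n → (Fin n → CAValuation S) → ℝ)
    (h : Fin n → (Fin n → CAValuation S) → ℝ)
    (hInd : ∀ (i : Fin n) (w w' : Fin n → CAValuation S),
      (∀ j, j ≠ i → w j = w' j) → h i w = h i w')
    (hp : ∀ (i : Fin n) (w : Fin n → CAValuation S),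
      p i w = (∑ j ∈ Finset.univ.erase i, (w j).val ((k w).1 j)) + h i w)
    (htruth : ∀ (i : Fin n) (v : CAValuation S) (w : Fin n → CAValuation S),
      v.val ((k (Function.update w i v)).1 i) + p i (Function.update w i v) ≥
        v.val ((k w).1 i) + p i w) :
    ∀ v : Fin n → CAValuation S,
      (∀ x y : CAAllocation S n, x ≠ y → welfare v x ≠ welfare v y) →
      IsGreatest
        {r : ℝ | ∃ w : Fin n → CAValuation S,
          (∀ x y : CAAllocation S n, x ≠ y → welfare w x ≠ welfare w y) ∧
          r = welfare v (k w)}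
        (welfare v (k v)) := by
  have hk : IsUnilaterallyOptimal k := isUnilaterallyOptimal_of_truthful hInd hp htruth
  intro v hv
  refine ⟨⟨v, hv, rfl⟩, ?_⟩
  rintro _ ⟨w, hw, rfl⟩
  exact hk.welfare_apply_le fun x y => not_imp_not.mp (hw x y)

/-- Theorem 2: if a VCG-based mechanism for the combinatorial auction
problem is truthful, then its allocation algorithm is maximal in its range at `Ṽ`,
the set of profiles at which distinct allocations have distinct total welfare. -/
theorem stmt_4 {S : Type*} [DecidableEq S] [Fintype S] [Nonempty S]
    {n : ℕ} (hn : 0 < n)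
    (k : (Fin n → CAValuation S) → CAAllocation S n)
    (p : Fin n → (Fin n → CAValuation S) → ℝ)
    (h : Fin n → (Fin n → CAValuation S) → ℝ)
    (hInd : ∀ (i : Fin n) (w w' : Fin n → CAValuation S),
      (∀ j, j ≠ i → w j = w' j) → h i w = h i w')
    (hp : ∀ (i : Fin n) (w : Fin n → CAValuation S),
      p i w = (∑ j ∈ Finset.univ.erase i, (w j).val ((k w).1 j)) + h i w)
    (htruth : ∀ (i : Fin n) (v : CAValuation S) (w : Fin n → CAValuation S),
      v.val ((k (Function.update w i v)).1 i) + p i (Function.update w i v) ≥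
        v.val ((k w).1 i) + p i w) :
    ∀ v : Fin n → CAValuation S,
      (∀ x y : CAAllocation S n, x ≠ y → welfare v x ≠ welfare v y) →
      IsGreatest
        {r : ℝ | ∃ w : Fin n → CAValuation S,
          (∀ x y : CAAllocation S n, x ≠ y → welfare w x ≠ welfare w y) ∧
          r = welfare v (k w)}
        (welfare v (k v)) :=
  stmt_4_general k p h hInd hp htruth
end

section
/- Let a CMAP satisfy the forcing condition and let (k, p) be a truthful VCG-based mechanism for it. Then k is either optimal (g(v, k(v)) = g_opt(v) for every v ∈ V) or degenerate (for every M there exists v ∈ V with (g_opt(v) − g(v, k(v)))/(|g_opt(v)| + 1) > M). -/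
/-- The total welfare of output `x` at type profile `v` in a CMAP, where `u i vᵢ xᵢ` is
agent `i`'s valuation of its part `xᵢ` of the output at type `vᵢ`. -/
def cmapWelfare {n : ℕ} {m : Fin n → ℕ}
    (u : ∀ i, (Fin (m i) → ℝ) → (Fin (m i) → Bool) → ℝ)
    (v : ∀ i, Fin (m i) → ℝ) (x : ∀ i, Fin (m i) → Bool) : ℝ :=
  ∑ i, u i (v i) (x i)

/-- The profile `v[α]` (relative to output `x`): keep `vᵢⱼ` on coordinates with
`xᵢⱼ = 1` and replace all other coordinates by `α`. -/
def cmapForce {n : ℕ} {m : Fin n → ℕ}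
    (v : ∀ i, Fin (m i) → ℝ) (x : ∀ i, Fin (m i) → Bool) (α : ℝ) :
    ∀ i, Fin (m i) → ℝ :=
  fun i j => if x i j then v i j else α

/-!
If the mechanism is not degenerate, its relative welfare loss is bounded by some `M`. Truthfulness
and VCG payments show that a single agent changing its declaration never lowers the welfare of
the chosen output at the new profile; chaining such changes one agent at a time shows that
`w ↦ g(w, k w)` is monotone on profiles. Given `v` and a competing output `y`, push all
coordinates of `v` outside the support of `y` to `α → -∞`: the forcing condition makes every other
output arbitrarily bad, so `y` is optimal with value `g(v, y)` and the bound `M` forces `k` to pick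
it. Raising the profile back to `v` gives `g(v, y) ≤ g(v, k v)`.
-/

open Finset Function Filter

section

variable {n : ℕ} {m : Fin n → ℕ}

def CmapDeviationImproving (Vsp : ∀ i, Set (Fin (m i) → ℝ))
    (u : ∀ i, (Fin (m i) → ℝ) → (Fin (m i) → Bool) → ℝ)
    (k : (∀ i, Fin (m i) → ℝ) → (∀ i, Fin (m i) → Bool)) : Prop :=
  ∀ (i : Fin n) (vi : Fin (m i) → ℝ), vi ∈ Vsp i → ∀ w : ∀ j, Fin (m j) → ℝ, (∀ j, w j ∈ Vsp j) →
    cmapWelfare u (update w i vi) (k w) ≤ cmapWelfare u (update w i vi) (k (update w i vi))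

variable {u : ∀ i, (Fin (m i) → ℝ) → (Fin (m i) → Bool) → ℝ} {Vsp : ∀ i, Set (Fin (m i) → ℝ)}
  {k : (∀ i, Fin (m i) → ℝ) → (∀ i, Fin (m i) → Bool)}

theorem cmapWelfare_mono (hmono : ∀ (i : Fin n) (v w : Fin (m i) → ℝ) (x : Fin (m i) → Bool),
      w ≤ v → u i w x ≤ u i v x)
    {v w : ∀ i, Fin (m i) → ℝ} (hwv : w ≤ v) (x : ∀ i, Fin (m i) → Bool) :
    cmapWelfare u w x ≤ cmapWelfare u v x :=
  sum_le_sum fun i _ => hmono i _ _ _ (hwv i)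

theorem cmapWelfare_cmapForce_self
    (hindep : ∀ (i : Fin n) (v w : Fin (m i) → ℝ) (x : Fin (m i) → Bool),
      (∀ j, x j = true → v j = w j) → u i v x = u i w x)
    (v : ∀ i, Fin (m i) → ℝ) (x : ∀ i, Fin (m i) → Bool) (α : ℝ) :
    cmapWelfare u (cmapForce v x α) x = cmapWelfare u v x :=
  sum_congr rfl fun i _ => hindep i _ _ _ fun j hj => by simp [cmapForce, hj]

theorem eventually_cmapForce_le (v : ∀ i, Fin (m i) → ℝ) (x : ∀ i, Fin (m i) → Bool) :
    ∀ᶠ α in atBot, cmapForce v x α ≤ v := by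
  have hα : ∀ᶠ α in atBot, ∀ i j, α ≤ v i j :=
    eventually_all.2 fun i => eventually_all.2 fun j => eventually_le_atBot (v i j)
  filter_upwards [hα] with α hα i j
  by_cases hx : x i j <;> simp [cmapForce, hx, hα i j]

/- Up to `h i`, which ignores agent `i`'s declaration, the VCG payment makes agent `i`'s utility
the welfare of the declared profile, so truthfulness is exactly this inequality. -/
theorem cmapDeviationImproving_of_truthful_vcg {p h : Fin n → (∀ i, Fin (m i) → ℝ) → ℝ}
    (hInd : ∀ (i : Fin n) (w w' : ∀ j, Fin (m j) → ℝ),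
      (∀ j, j ≠ i → w j = w' j) → h i w = h i w')
    (hp : ∀ (i : Fin n) (w : ∀ j, Fin (m j) → ℝ),
      p i w = (∑ j ∈ univ.erase i, u j (w j) (k w j)) + h i w)
    (htruth : ∀ (i : Fin n) (vi : Fin (m i) → ℝ), vi ∈ Vsp i →
      ∀ w : ∀ j, Fin (m j) → ℝ, (∀ j, w j ∈ Vsp j) →
        u i vi (k (update w i vi) i) + p i (update w i vi) ≥ u i vi (k w i) + p i w) :
    CmapDeviationImproving Vsp u k := by
  intro i vi hvi w hw
  have ht := htruth i vi hvi w hw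
  rw [hp, hp, hInd i (update w i vi) w fun j hj => update_of_ne hj _ _] at ht
  have hsplit : ∀ (v : ∀ j, Fin (m j) → ℝ) (x : ∀ j, Fin (m j) → Bool), cmapWelfare u v x =
      u i (v i) (x i) + ∑ j ∈ univ.erase i, u j (v j) (x j) :=
    fun v x => (add_sum_erase _ _ (mem_univ i)).symm
  have hothers : ∑ j ∈ univ.erase i, u j (update w i vi j) (k w j) =
      ∑ j ∈ univ.erase i, u j (w j) (k w j) :=
    sum_congr rfl fun j hj => by rw [update_of_ne (ne_of_mem_erase hj)]
  rw [hsplit, hsplit, hothers, update_self]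
  linarith

theorem CmapDeviationImproving.cmapWelfare_le (hdev : CmapDeviationImproving Vsp u k)
    (hdown : ∀ (i : Fin n) (v w : Fin (m i) → ℝ), v ∈ Vsp i → w ≤ v → w ∈ Vsp i)
    (hmono : ∀ (i : Fin n) (v w : Fin (m i) → ℝ) (x : Fin (m i) → Bool),
      w ≤ v → u i w x ≤ u i v x)
    {v w : ∀ i, Fin (m i) → ℝ} (hv : ∀ i, v i ∈ Vsp i) (hwv : w ≤ v) :
    cmapWelfare u w (k w) ≤ cmapWelfare u v (k v) := by
  classical
  have hle : ∀ s : Finset (Fin n), s.piecewise v w ≤ v := fun s =>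
    piecewise_le_of_le_of_le s le_rfl hwv
  suffices ∀ s : Finset (Fin n),
      cmapWelfare u w (k w) ≤ cmapWelfare u (s.piecewise v w) (k (s.piecewise v w)) by
    simpa using this univ
  intro s
  induction s using Finset.induction_on with
  | empty => simp
  | insert a s _ ih =>
    rw [piecewise_insert]
    calc cmapWelfare u w (k w)
        ≤ cmapWelfare u (s.piecewise v w) (k (s.piecewise v w)) := ih
      _ ≤ cmapWelfare u (update (s.piecewise v w) a (v a)) (k (s.piecewise v w)) :=
          cmapWelfare_mono hmono (le_update_iff.2 ⟨hle s a, fun _ _ => le_rfl⟩) _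
      _ ≤ _ := hdev a (v a) (hv a) _ fun i => hdown i (v i) _ (hv i) (hle s i)

/- Once the coordinates outside the support of `y` are low enough, every other output has welfare
at least `|M| (|C| + 1) + 1` below `C = g(v, y)`, so choosing one would exceed the loss bound `M`. -/
theorem eventually_k_cmapForce_eq {O : Finset (∀ i, Fin (m i) → Bool)} (hO : O.Nonempty)
    (hdown : ∀ (i : Fin n) (v w : Fin (m i) → ℝ), v ∈ Vsp i → w ≤ v → w ∈ Vsp i)
    (hindep : ∀ (i : Fin n) (v w : Fin (m i) → ℝ) (x : Fin (m i) → Bool),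
      (∀ j, x j = true → v j = w j) → u i v x = u i w x)
    (hk : ∀ v : ∀ i, Fin (m i) → ℝ, (∀ i, v i ∈ Vsp i) → k v ∈ O) {M : ℝ}
    (hM : ∀ v : ∀ i, Fin (m i) → ℝ, (∀ i, v i ∈ Vsp i) →
      (O.sup' hO (fun x => cmapWelfare u v x) - cmapWelfare u v (k v)) /
        (|O.sup' hO (fun x => cmapWelfare u v x)| + 1) ≤ M)
    {v : ∀ i, Fin (m i) → ℝ} (hv : ∀ i, v i ∈ Vsp i) {y : ∀ i, Fin (m i) → Bool} (hy : y ∈ O)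
    (hforce : ∀ z ∈ O, z ≠ y →
      Tendsto (fun α : ℝ => cmapWelfare u (cmapForce v y α) z) atBot atBot) :
    ∀ᶠ α in atBot, cmapForce v y α ≤ v ∧ k (cmapForce v y α) = y := by
  set C := cmapWelfare u v y
  have hgap : 0 ≤ |M| * (|C| + 1) := by positivity
  have hothers : ∀ᶠ α in atBot,
      ∀ z ∈ O.erase y, cmapWelfare u (cmapForce v y α) z ≤ C - (|M| * (|C| + 1) + 1) :=
    (eventually_all_finset _).2 fun z hz =>
      (hforce z (mem_of_mem_erase hz) (ne_of_mem_erase hz)).eventually_le_atBot _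
  filter_upwards [eventually_cmapForce_le v y, hothers] with α hle hα
  refine ⟨hle, by_contra fun hne => ?_⟩
  have hv' : ∀ i, cmapForce v y α i ∈ Vsp i := fun i => hdown i _ _ (hv i) (hle i)
  have hy' := cmapWelfare_cmapForce_self hindep v y α
  have hsup : O.sup' hO (fun x => cmapWelfare u (cmapForce v y α) x) = C := by
    refine le_antisymm (sup'_le _ _ fun z hz => ?_) (hy'.ge.trans (le_sup' _ hy))
    rcases eq_or_ne z y with rfl | hzy
    · exact hy'.le
    · linarith [hα z (mem_erase.2 ⟨hzy, hz⟩)]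
  have hloss := hM _ hv'
  rw [hsup, div_le_iff₀ (by positivity)] at hloss
  linarith [hα _ (mem_erase.2 ⟨hne, hk _ hv'⟩),
    mul_le_mul_of_nonneg_right (le_abs_self M) (by positivity : (0 : ℝ) ≤ |C| + 1)]

end

theorem stmt_8_general {n : ℕ} (m : Fin n → ℕ)
    (Vsp : ∀ i, Set (Fin (m i) → ℝ))
    (hdown : ∀ (i : Fin n) (v w : Fin (m i) → ℝ), v ∈ Vsp i → w ≤ v → w ∈ Vsp i)
    (O : Finset (∀ i, Fin (m i) → Bool)) (hO : O.Nonempty)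
    (u : ∀ i, (Fin (m i) → ℝ) → (Fin (m i) → Bool) → ℝ)
    (hindep : ∀ (i : Fin n) (v w : Fin (m i) → ℝ) (x : Fin (m i) → Bool),
      (∀ j, x j = true → v j = w j) → u i v x = u i w x)
    (hmono : ∀ (i : Fin n) (v w : Fin (m i) → ℝ) (x : Fin (m i) → Bool),
      w ≤ v → u i w x ≤ u i v x)
    (hforce : ∀ v : ∀ i, Fin (m i) → ℝ, (∀ i, v i ∈ Vsp i) →
      ∀ x ∈ O, ∀ y ∈ O, y ≠ x →
        Filter.Tendsto (fun α : ℝ => cmapWelfare u (cmapForce v x α) y)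
          Filter.atBot Filter.atBot)
    (k : (∀ i, Fin (m i) → ℝ) → (∀ i, Fin (m i) → Bool))
    (hk : ∀ v : ∀ i, Fin (m i) → ℝ, (∀ i, v i ∈ Vsp i) → k v ∈ O)
    (p : Fin n → (∀ i, Fin (m i) → ℝ) → ℝ)
    (h : Fin n → (∀ i, Fin (m i) → ℝ) → ℝ)
    (hInd : ∀ (i : Fin n) (w w' : ∀ j, Fin (m j) → ℝ),
      (∀ j, j ≠ i → w j = w' j) → h i w = h i w')
    (hp : ∀ (i : Fin n) (w : ∀ j, Fin (m j) → ℝ),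
      p i w = (∑ j ∈ Finset.univ.erase i, u j (w j) (k w j)) + h i w)
    (htruth : ∀ (i : Fin n) (vi : Fin (m i) → ℝ), vi ∈ Vsp i →
      ∀ w : ∀ j, Fin (m j) → ℝ, (∀ j, w j ∈ Vsp j) →
        u i vi (k (Function.update w i vi) i) + p i (Function.update w i vi) ≥
          u i vi (k w i) + p i w) :
    (∀ v : ∀ i, Fin (m i) → ℝ, (∀ i, v i ∈ Vsp i) →
        cmapWelfare u v (k v) = O.sup' hO (fun x => cmapWelfare u v x)) ∨
    (∀ M : ℝ, ∃ v : ∀ i, Fin (m i) → ℝ, (∀ i, v i ∈ Vsp i) ∧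
        (O.sup' hO (fun x => cmapWelfare u v x) - cmapWelfare u v (k v)) /
          (|O.sup' hO (fun x => cmapWelfare u v x)| + 1) > M) := by
  refine or_iff_not_imp_right.2 fun hdeg => ?_
  push Not at hdeg
  obtain ⟨M, hM⟩ := hdeg
  have hdev := cmapDeviationImproving_of_truthful_vcg hInd hp htruth
  intro v hv
  refine le_antisymm (le_sup' _ (hk v hv)) (sup'_le _ _ fun y hy => ?_)
  obtain ⟨α, hle, hky⟩ :=
    (eventually_k_cmapForce_eq hO hdown hindep hk hM hv hy (hforce v hv y hy)).exists
  calc cmapWelfare u v y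
      = cmapWelfare u (cmapForce v y α) (k (cmapForce v y α)) := by
        rw [hky, cmapWelfare_cmapForce_self hindep]
    _ ≤ cmapWelfare u v (k v) := hdev.cmapWelfare_le hdown hmono hv hle

/-- Theorem 5: for a cost minimization allocation problem satisfying the
forcing condition, the output algorithm of any truthful VCG-based mechanism is either
optimal or degenerate. -/
theorem stmt_8 {n : ℕ} (hn : 0 < n) (m : Fin n → ℕ)
    (Vsp : ∀ i, Set (Fin (m i) → ℝ))
    (hdown : ∀ (i : Fin n) (v w : Fin (m i) → ℝ), v ∈ Vsp i → w ≤ v → w ∈ Vsp i)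
    (O : Finset (∀ i, Fin (m i) → Bool)) (hO : O.Nonempty)
    (u : ∀ i, (Fin (m i) → ℝ) → (Fin (m i) → Bool) → ℝ)
    (hindep : ∀ (i : Fin n) (v w : Fin (m i) → ℝ) (x : Fin (m i) → Bool),
      (∀ j, x j = true → v j = w j) → u i v x = u i w x)
    (hmono : ∀ (i : Fin n) (v w : Fin (m i) → ℝ) (x : Fin (m i) → Bool),
      w ≤ v → u i w x ≤ u i v x)
    (hforce : ∀ v : ∀ i, Fin (m i) → ℝ, (∀ i, v i ∈ Vsp i) →
      ∀ x ∈ O, ∀ y ∈ O, y ≠ x →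
        Filter.Tendsto (fun α : ℝ => cmapWelfare u (cmapForce v x α) y)
          Filter.atBot Filter.atBot)
    (k : (∀ i, Fin (m i) → ℝ) → (∀ i, Fin (m i) → Bool))
    (hk : ∀ v : ∀ i, Fin (m i) → ℝ, (∀ i, v i ∈ Vsp i) → k v ∈ O)
    (p : Fin n → (∀ i, Fin (m i) → ℝ) → ℝ)
    (h : Fin n → (∀ i, Fin (m i) → ℝ) → ℝ)
    (hInd : ∀ (i : Fin n) (w w' : ∀ j, Fin (m j) → ℝ),
      (∀ j, j ≠ i → w j = w' j) → h i w = h i w')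
    (hp : ∀ (i : Fin n) (w : ∀ j, Fin (m j) → ℝ),
      p i w = (∑ j ∈ Finset.univ.erase i, u j (w j) (k w j)) + h i w)
    (htruth : ∀ (i : Fin n) (vi : Fin (m i) → ℝ), vi ∈ Vsp i →
      ∀ w : ∀ j, Fin (m j) → ℝ, (∀ j, w j ∈ Vsp j) →
        u i vi (k (Function.update w i vi) i) + p i (Function.update w i vi) ≥
          u i vi (k w i) + p i w) :
    (∀ v : ∀ i, Fin (m i) → ℝ, (∀ i, v i ∈ Vsp i) →
        cmapWelfare u v (k v) = O.sup' hO (fun x => cmapWelfare u v x)) ∨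
    (∀ M : ℝ, ∃ v : ∀ i, Fin (m i) → ℝ, (∀ i, v i ∈ Vsp i) ∧
        (O.sup' hO (fun x => cmapWelfare u v x) - cmapWelfare u v (k v)) /
          (|O.sup' hO (fun x => cmapWelfare u v x)| + 1) > M) :=
  stmt_8_general m Vsp hdown O hO u hindep hmono hforce k hk p h hInd hp htruth
end

section
/- Fix an agent i with true valuation v^i and let b^i be an appeal-independent revision function for agent i, i.e., every action vector a^{-i} in the domain of b^i has all appeals equal to the empty appeal ⊥. Then there exists an appeal l^i such that the truthful action (v^i, l^i) is feasibly dominant with respect to b^i: for every a^{-i} in the domain of b^i, u^i((v^i, l^i), a^{-i}) ≥ u^i(b^i(a^{-i}), a^{-i}). -/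
/-- A valuation profile: one valuation per agent. -/
abbrev SCProfile (O : Type*) (n : ℕ) := Fin n → O → ℝ

/-- An appeal: a partial function from profiles to profiles, modelled via `Option`. -/
abbrev SCAppeal (O : Type*) (n : ℕ) := SCProfile O n → Option (SCProfile O n)

/-- The total welfare of output `o` at profile `v`. -/
def scWelfare {O : Type*} {n : ℕ} [Fintype (Fin n)] (v : SCProfile O n) (o : O) : ℝ :=
  ∑ i, v i o

/-- The candidate outputs of the second chance mechanism based on algorithm `k` at the
declared profile `w` and appeal profile `l`: `k(w)` together with `k(lⁱ(w))` for every
agent `i` whose appeal is defined at `w`. -/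
def scCandidates {O : Type*} {n : ℕ} (k : SCProfile O n → O)
    (w : SCProfile O n) (l : Fin n → SCAppeal O n) : Set O :=
  {o | o = k w ∨ ∃ (i : Fin n) (w' : SCProfile O n), l i w = some w' ∧ o = k w'}

/-- An action in the second chance mechanism: a declared valuation and an appeal. -/
abbrev SCAction (O : Type*) (n : ℕ) := (O → ℝ) × SCAppeal O n

/-- The empty appeal `⊥`: the appeal whose domain is empty. -/
def emptyAppeal (O : Type*) (n : ℕ) : SCAppeal O n := fun _ => none

/-- Agent `i`'s utility in the second chance mechanism based on `k` (with tie-breaking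
selection rule `choose` and functions `hⁱ`) when its true valuation is `v` and the
action profile is `a`: the value of the chosen output plus the VCG payment. -/
def scUtil {O : Type*} {n : ℕ} [Fintype (Fin n)]
    (choose : SCProfile O n → (Fin n → SCAppeal O n) → O)
    (h : Fin n → SCProfile O n → (Fin n → SCAppeal O n) → ℝ)
    (i : Fin n) (v : O → ℝ) (a : Fin n → SCAction O n) : ℝ :=
  let w : SCProfile O n := fun j => (a j).1
  let l : Fin n → SCAppeal O n := fun j => (a j).2
  v (choose w l) + ((∑ j ∈ Finset.univ.erase i, w j (choose w l)) + h i w l)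

/-!
Let `o'` be the outcome agent `i` would obtain by playing its revised action. Since the others
declare without appealing whenever the revision is defined, the revision — and hence `o'` — is
determined by the declared profile, so agent `i` can appeal to some profile `p` with `k p = o'`.
Declaring truthfully with that appeal makes `o'` a candidate; by the VCG payments agent `i`'s
utility is then the true welfare of the chosen outcome plus a term it cannot influence, and the
chosen outcome maximises welfare over the candidates, `o'` included.
-/

section

variable {O : Type*} {n : ℕ}

def scOutcome (choose : SCProfile O n → (Fin n → SCAppeal O n) → O)
    (a : Fin n → SCAction O n) : O :=
  choose (fun j => (a j).1) (fun j => (a j).2)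

theorem scCandidates_subset_range (k : SCProfile O n → O) (w : SCProfile O n)
    (l : Fin n → SCAppeal O n) : scCandidates k w l ⊆ Set.range k := by
  rintro o (rfl | ⟨j, w', -, rfl⟩)
  exacts [⟨w, rfl⟩, ⟨w', rfl⟩]

theorem scWelfare_eq_add_sum_erase (w : SCProfile O n) (i : Fin n) (o : O) :
    scWelfare w o = w i o + ∑ j ∈ Finset.univ.erase i, w j o :=
  (Finset.add_sum_erase _ _ (Finset.mem_univ i)).symm

theorem scUtil_eq (choose : SCProfile O n → (Fin n → SCAppeal O n) → O)
    (h : Fin n → SCProfile O n → (Fin n → SCAppeal O n) → ℝ)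
    (i : Fin n) (v : O → ℝ) (a : Fin n → SCAction O n) :
    scUtil choose h i v a = v (scOutcome choose a) +
      (∑ j ∈ Finset.univ.erase i, (a j).1 (scOutcome choose a) +
        h i (fun j => (a j).1) (fun j => (a j).2)) :=
  rfl

theorem scUtil_eq_scWelfare_add_of_truthful
    (choose : SCProfile O n → (Fin n → SCAppeal O n) → O)
    (h : Fin n → SCProfile O n → (Fin n → SCAppeal O n) → ℝ)
    (i : Fin n) (v : O → ℝ) {a : Fin n → SCAction O n} (ha : (a i).1 = v) :
    scUtil choose h i v a =
      scWelfare (fun j => (a j).1) (scOutcome choose a) +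
        h i (fun j => (a j).1) (fun j => (a j).2) := by
  rw [scUtil_eq, scWelfare_eq_add_sum_erase _ i, ha, add_assoc]

theorem scUtil_le_of_mem_scCandidates (k : SCProfile O n → O)
    (choose : SCProfile O n → (Fin n → SCAppeal O n) → O)
    (h : Fin n → SCProfile O n → (Fin n → SCAppeal O n) → ℝ)
    (i : Fin n) (v : O → ℝ) {a a' : Fin n → SCAction O n}
    (hmax : ∀ o ∈ scCandidates k (fun j => (a j).1) (fun j => (a j).2),
      scWelfare (fun j => (a j).1) o ≤ scWelfare (fun j => (a j).1) (scOutcome choose a))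
    (hInd : ∀ (w w' : SCProfile O n) (l l' : Fin n → SCAppeal O n),
      (∀ j, j ≠ i → w j = w' j) → (∀ j, j ≠ i → l j = l' j) → h i w l = h i w' l')
    (hagree : ∀ j, j ≠ i → a j = a' j) (htruth : (a i).1 = v)
    (hmem : scOutcome choose a' ∈ scCandidates k (fun j => (a j).1) (fun j => (a j).2)) :
    scUtil choose h i v a' ≤ scUtil choose h i v a := by
  have hh : h i (fun j => (a' j).1) (fun j => (a' j).2) =
      h i (fun j => (a j).1) (fun j => (a j).2) :=
    hInd _ _ _ _ (fun j hj => by rw [hagree j hj]) (fun j hj => by rw [hagree j hj])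
  have hsum : ∑ j ∈ Finset.univ.erase i, (a' j).1 (scOutcome choose a') =
      ∑ j ∈ Finset.univ.erase i, (a j).1 (scOutcome choose a') :=
    Finset.sum_congr rfl fun j hj => by rw [hagree j (Finset.ne_of_mem_erase hj)]
  calc scUtil choose h i v a'
      = scWelfare (fun j => (a j).1) (scOutcome choose a') +
          h i (fun j => (a j).1) (fun j => (a j).2) := by
        rw [scUtil_eq, hsum, hh, scWelfare_eq_add_sum_erase _ i, htruth, add_assoc]
    _ ≤ scWelfare (fun j => (a j).1) (scOutcome choose a) +
          h i (fun j => (a j).1) (fun j => (a j).2) := by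
        gcongr
        exact hmax _ hmem
    _ = scUtil choose h i v a := (scUtil_eq_scWelfare_add_of_truthful choose h i v htruth).symm

def scNoAppealActions (u : SCProfile O n) : Fin n → SCAction O n :=
  fun j => (u j, emptyAppeal O n)

/-- At the declared profile `u`, ask for a profile on which `k` returns the outcome that
agent `i` would get by playing `b` while the others declare `u` without appealing. -/
noncomputable def scRevisionAppeal (k : SCProfile O n → O)
    (choose : SCProfile O n → (Fin n → SCAppeal O n) → O)
    (b : (Fin n → SCAction O n) → Option (SCAction O n)) (i : Fin n) : SCAppeal O n :=
  fun u => (b (scNoAppealActions u)).map fun a' =>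
    Function.invFun k (scOutcome choose (Function.update (scNoAppealActions u) i a'))

theorem scRevisionAppeal_eq_some (k : SCProfile O n → O)
    (choose : SCProfile O n → (Fin n → SCAppeal O n) → O)
    {b : (Fin n → SCAction O n) → Option (SCAction O n)} {i : Fin n}
    (hbInd : ∀ a a' : Fin n → SCAction O n, (∀ j, j ≠ i → a j = a' j) → b a = b a')
    {a : Fin n → SCAction O n} {a' : SCAction O n} (hba : b a = some a')
    (hempty : ∀ j, j ≠ i → (a j).2 = emptyAppeal O n)
    {u : SCProfile O n} (hu : ∀ j, j ≠ i → u j = (a j).1) :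
    scRevisionAppeal k choose b i u =
      some (Function.invFun k (scOutcome choose (Function.update a i a'))) := by
  have hagree : ∀ j, j ≠ i → scNoAppealActions u j = a j := fun j hj =>
    Prod.ext (hu j hj) (hempty j hj).symm
  have hupdate : Function.update (scNoAppealActions u) i a' = Function.update a i a' := by
    funext j
    rcases eq_or_ne j i with rfl | hj
    · simp only [Function.update_self]
    · simp only [Function.update_of_ne hj, hagree j hj]
  rw [scRevisionAppeal, hbInd _ _ hagree, hba, Option.map_some, hupdate]

end

theorem stmt_14_general {O : Type*} {n : ℕ}
    (k : SCProfile O n → O)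
    (choose : SCProfile O n → (Fin n → SCAppeal O n) → O)
    (hchoose : ∀ (w : SCProfile O n) (l : Fin n → SCAppeal O n),
      choose w l ∈ scCandidates k w l ∧
      ∀ o ∈ scCandidates k w l, scWelfare w o ≤ scWelfare w (choose w l))
    (h : Fin n → SCProfile O n → (Fin n → SCAppeal O n) → ℝ)
    (hInd : ∀ (i : Fin n) (w w' : SCProfile O n) (l l' : Fin n → SCAppeal O n),
      (∀ j, j ≠ i → w j = w' j) → (∀ j, j ≠ i → l j = l' j) → h i w l = h i w' l')
    (i : Fin n) (v : O → ℝ)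
    (b : (Fin n → SCAction O n) → Option (SCAction O n))
    (hbInd : ∀ a a' : Fin n → SCAction O n, (∀ j, j ≠ i → a j = a' j) → b a = b a')
    (hbAppealFree : ∀ a : Fin n → SCAction O n, (b a).isSome →
      ∀ j, j ≠ i → (a j).2 = emptyAppeal O n) :
    ∃ li : SCAppeal O n, ∀ (a : Fin n → SCAction O n) (a' : SCAction O n),
      b a = some a' →
      scUtil choose h i v (Function.update a i (v, li)) ≥
        scUtil choose h i v (Function.update a i a') := by
  refine ⟨scRevisionAppeal k choose b i, fun a a' hba => ?_⟩
  set truthful := Function.update a i (v, scRevisionAppeal k choose b i)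
  set revised := Function.update a i a'
  have hagree : ∀ j, j ≠ i → truthful j = revised j := fun j hj => by
    simp only [truthful, revised, Function.update_of_ne hj]
  have happeal := scRevisionAppeal_eq_some k choose hbInd hba
    (hbAppealFree a (by rw [hba]; rfl)) (u := fun j => (truthful j).1)
    (fun j hj => by simp only [truthful, Function.update_of_ne hj])
  have hmem : scOutcome choose revised ∈
      scCandidates k (fun j => (truthful j).1) (fun j => (truthful j).2) := by
    have hrange : scOutcome choose revised ∈ Set.range k :=
      scCandidates_subset_range k _ _ (hchoose _ _).1
    refine Or.inr ⟨i, _, ?_, (Function.invFun_eq hrange).symm⟩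
    simpa only [truthful, Function.update_self] using happeal
  exact scUtil_le_of_mem_scCandidates k choose h i v ((hchoose _ _).2) (hInd i) hagree
    (by simp only [truthful, Function.update_self]) hmem

/-- Theorem 7: in the second chance mechanism, an agent with an
appeal-independent revision function `b` (every action vector in the domain of `b` has
all appeals empty) has a feasibly dominant truthful action: there is an appeal `li`
such that for every action vector in the domain of `b`, playing `(v, li)` is at least
as good as playing the revised action. -/
theorem stmt_14 {O : Type*} [Fintype O] [Nonempty O] {n : ℕ} (hn : 0 < n)
    (k : SCProfile O n → O)
    (choose : SCProfile O n → (Fin n → SCAppeal O n) → O)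
    (hchoose : ∀ (w : SCProfile O n) (l : Fin n → SCAppeal O n),
      choose w l ∈ scCandidates k w l ∧
      ∀ o ∈ scCandidates k w l, scWelfare w o ≤ scWelfare w (choose w l))
    (h : Fin n → SCProfile O n → (Fin n → SCAppeal O n) → ℝ)
    (hInd : ∀ (i : Fin n) (w w' : SCProfile O n) (l l' : Fin n → SCAppeal O n),
      (∀ j, j ≠ i → w j = w' j) → (∀ j, j ≠ i → l j = l' j) → h i w l = h i w' l')
    (i : Fin n) (v : O → ℝ)
    (b : (Fin n → SCAction O n) → Option (SCAction O n))
    (hbInd : ∀ a a' : Fin n → SCAction O n, (∀ j, j ≠ i → a j = a' j) → b a = b a')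
    (hbAppealFree : ∀ a : Fin n → SCAction O n, (b a).isSome →
      ∀ j, j ≠ i → (a j).2 = emptyAppeal O n) :
    ∃ li : SCAppeal O n, ∀ (a : Fin n → SCAction O n) (a' : SCAction O n),
      b a = some a' →
      scUtil choose h i v (Function.update a i (v, li)) ≥
        scUtil choose h i v (Function.update a i a') :=
  stmt_14_general k choose hchoose h hInd i v b hbInd hbAppealFree
end
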